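/- Let X be a Banach space, F ∈ 𝓕^X_{M,a} with M ≥ 1, a ∈ ℝ, t > 0, and let (n_k) be an increasing sequence of natural numbers. Then for any separable closed linear subspaces Φ ⊂ X and Ψ ⊂ X* there exists a subsequence (g_k) of (n_k) such that the limit lim_{k→∞} (F(t/g_k)^{[g_k s]} g, φ) exists for all g ∈ Φ, φ ∈ Ψ, s > 0. Moreover, if such a subsequence (g_k) is chosen and T_s(g, φ) := lim_{k→∞} (F(t/g_k)^{[g_k s/t]} g, φ) for s ≥ 0, then: (a) T_s(g, φ) is linear in g and in φ with |T_s(g, φ)| ≤ M·exp(a·s)·‖g‖·‖φ‖; (b) s ↦ T_s(g, φ) is continuous for each g ∈ Φ, φ ∈ Ψ, uniformly in φ ranging over any bounded subset of Ψ; (c) if f ∈ Φ ∩ D(F'(0)) and F'(0)f ∈ Φ, then d/ds T_s(f, φ) = T_s(F'(0)f, φ) for all s ≥ 0, uniformly in φ ranging over any bounded subset of Ψ; (d) if φ ∈ D((F*)'(0)) and (F*)'(0)φ ∈ Ψ, then T_m(f, φ) − T_l(f, φ) = ∫_l^m T_s(f, (F*)'(0)φ) ds for all m, l ≥ 0 and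 f ∈ Φ; (e) under the assumptions of (d), d/ds T_s(f, φ) = T_s(f, (F*)'(0)φ) for all s ≥ 0 and f ∈ Φ. -/

import Mathlib

open Filter Topology MeasureTheory

noncomputable section

variable {X : Type*} [NormedAddCommGroup X] [NormedSpace ℝ X] [CompleteSpace X]

/-- `y` is the value of the strong derivative at `0` of `F : [0,∞) → L(X)` at `ψ`. -/
def DerivAtZero (F : ℝ → (X →L[ℝ] X)) (ψ y : X) : Prop :=
  Tendsto (fun h : ℝ => h⁻¹ • (F h ψ - F 0 ψ)) (𝓝[>] (0 : ℝ)) (𝓝 y)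

/-- The class `𝓕^X_{M,a}`. -/
def MemFClass (F : ℝ → (X →L[ℝ] X)) (M a : ℝ) : Prop :=
  F 0 = 1 ∧
    (∀ n m : ℕ, 0 < n → 0 < m → ∀ s : ℝ, 0 ≤ s →
      ‖(F (s / n)) ^ m‖ ≤ M * Real.exp (a * m * s / n)) ∧
    Dense {ψ : X | ∃ y, DerivAtZero F ψ y}

/-- The class `𝓕_X`. -/
def MemF (F : ℝ → (X →L[ℝ] X)) : Prop := ∃ M, 1 ≤ M ∧ ∃ a : ℝ, MemFClass F M a

/-- The adjoint of a bounded operator, acting on the dual space. -/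
noncomputable def adjCLM (T : X →L[ℝ] X) :
    StrongDual ℝ X →L[ℝ] StrongDual ℝ X :=
  LinearMap.mkContinuous
    { toFun := fun φ => φ.comp T
      map_add' := fun φ ψ => by ext x; simp
      map_smul' := fun c φ => by ext x; simp }
    ‖T‖ (fun φ => by simpa [mul_comm] using φ.opNorm_comp_le T)

/-- `ψ` is the value at `φ` of the strong derivative at `0` of `s ↦ F(s)*`. -/
def AdjDerivAtZero (F : ℝ → (X →L[ℝ] X)) (φ ψ : StrongDual ℝ X) : Prop :=
  Tendsto (fun h : ℝ => h⁻¹ • (adjCLM (F h) φ - adjCLM (F 0) φ)) (𝓝[>] (0 : ℝ)) (𝓝 ψ)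

/-- A `C₀`-semigroup on `X` (as a function on `[0,∞)`, modelled on all of `ℝ`). -/
def IsC0Semigroup (S : ℝ → (X →L[ℝ] X)) : Prop :=
  S 0 = 1 ∧ (∀ a b : ℝ, 0 ≤ a → 0 ≤ b → S (a + b) = S a * S b) ∧
    (∀ x : X, ContinuousOn (fun s => S s x) (Set.Ici (0 : ℝ))) ∧
    ∃ M, 1 ≤ M ∧ ∃ w : ℝ, ∀ s : ℝ, 0 ≤ s → ‖S s‖ ≤ M * Real.exp (w * s)

/-- `Z` is the generator of the semigroup `S`: the strong derivative of `S` at `0`,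
with its maximal domain, coincides with `Z`. -/
def IsGeneratorOf (S : ℝ → (X →L[ℝ] X)) (Z : X →ₗ.[ℝ] X) : Prop :=
  ∀ x y : X, DerivAtZero S x y ↔ ∃ hx : x ∈ Z.domain, Z ⟨x, hx⟩ = y

/-- Every subsequence of `u` has a weakly convergent subsubsequence. -/
def WeakSubCvg (u : ℕ → X) : Prop :=
  ∀ k : ℕ → ℕ, StrictMono k → ∃ j : ℕ → ℕ, StrictMono j ∧ ∃ L : X,
    ∀ φ : StrongDual ℝ X, Tendsto (fun i => φ (u (k (j i)))) atTop (𝓝 (φ L))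

/-- `(f, y)` belongs to the closure of the graph of `F'(0)`. -/
def InClosureGraphF (F : ℝ → (X →L[ℝ] X)) (f y : X) : Prop :=
  (f, y) ∈ closure {p : X × X | DerivAtZero F p.1 p.2}

/-!
Write `τ = t / g_k`, so that `F(t/g_k)^[g_k s/t] = U_τ(s) := F(τ)^[s/τ]`. The growth bound
`‖F(τ)^p‖ ≤ M e^{a p τ}` bounds `U_τ(s)` uniformly for `s` in compact sets. For `g'` in the
domain of `F'(0)` one has `‖F(τ)g' - g'‖ = O(τ)`, so telescoping gives
`‖U_τ(s)g' - U_τ(s')g'‖ = O(|s - s'| + τ)`; by density of that domain the orbits `s ↦ U_τ(s)g`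
are asymptotically equicontinuous for every `g`. Bolzano–Weierstrass on a countable product
(countable dense subsets of `Φ` and `Ψ`, rational times) yields the subsequence, and
equicontinuity together with the uniform bound spreads the convergence to all of
`Φ × Ψ × [0, ∞)`. The same estimates pass to the limit and give (a), (b).

For (c)–(e): `(U_τ(m)f, φ) - (U_τ(l)f, φ)` telescopes into `Σ_p (F(τ)^p (F(τ)f - f), φ)`, which
is exactly the integral of the step function `r ↦ (U_τ(r) τ⁻¹(F(τ)f - f), φ)` between the grid
points below `l` and `m`. As `τ⁻¹(F(τ)f - f) → F'(0)f`, dominated convergence turns it into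
`∫ T_r(F'(0)f, φ) dr`; letting `F(τ)` act on `φ` instead gives the adjoint version, and the
fundamental theorem of calculus gives the derivatives.
-/

lemma floor_div_mul_le {s τ : ℝ} (hs : 0 ≤ s) (hτ : 0 ≤ τ) : (⌊s / τ⌋₊ : ℝ) * τ ≤ s := by
  rcases hτ.eq_or_lt with rfl | hτ
  · simpa using hs
  · exact (le_div_iff₀ hτ).1 (Nat.floor_le (div_nonneg hs hτ.le))

lemma sub_lt_floor_div_mul (s : ℝ) {τ : ℝ} (hτ : 0 < τ) : s - τ < (⌊s / τ⌋₊ : ℝ) * τ := by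
  have h := (div_lt_iff₀ hτ).1 (Nat.lt_floor_add_one (s / τ))
  linarith [add_mul (⌊s / τ⌋₊ : ℝ) 1 τ]

lemma abs_floor_div_sub_floor_div_mul_le {s s' τ : ℝ} (hs : 0 ≤ s) (hs' : 0 ≤ s')
    (hτ : 0 < τ) : |(⌊s / τ⌋₊ : ℝ) - ⌊s' / τ⌋₊| * τ ≤ |s - s'| + τ := by
  rw [← abs_of_pos hτ, ← abs_mul, abs_of_pos hτ, sub_mul, abs_sub_le_iff]
  have := floor_div_mul_le hs hτ.le
  have := floor_div_mul_le hs' hτ.le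
  have := sub_lt_floor_div_mul s hτ
  have := sub_lt_floor_div_mul s' hτ
  constructor <;> linarith [le_abs_self (s - s'), neg_abs_le (s - s')]

lemma mul_div_add_one_lt {K ε : ℝ} (hK : 0 ≤ K) (hε : 0 < ε) : K * (ε / (K + 1)) < ε := by
  rw [mul_div_assoc', div_lt_iff₀ (by positivity)]
  nlinarith

lemma cauchySeq_of_forall_eventually_dist_lt {α : Type*} [PseudoMetricSpace α] {u : ℕ → α}
    (h : ∀ ε > 0, ∃ x, ∀ᶠ j in atTop, dist (u j) x < ε) : CauchySeq u := by
  rw [Metric.cauchySeq_iff]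
  intro ε hε
  obtain ⟨x, hx⟩ := h (ε / 2) (half_pos hε)
  obtain ⟨N, hN⟩ := eventually_atTop.1 hx
  exact ⟨N, fun m hm n hn => (dist_triangle_right _ _ x).trans_lt (by linarith [hN m hm, hN n hn])⟩

lemma exists_strictMono_forall_tendsto_of_abs_le {I : Type*} [Countable I] (v : ℕ → I → ℝ)
    (C : I → ℝ) (hv : ∀ j i, |v j i| ≤ C i) :
    ∃ k : ℕ → ℕ, StrictMono k ∧ ∀ i, ∃ L, Tendsto (fun j => v (k j) i) atTop (𝓝 L) := by
  obtain ⟨L, -, k, hk, hL⟩ := (isCompact_univ_pi fun i => isCompact_Icc).isSeqCompact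
    fun j => Set.mem_univ_pi.2 fun i => abs_le.1 (hv j i)
  exact ⟨k, hk, fun i => ⟨L i, tendsto_pi_nhds.1 hL i⟩⟩

lemma eqOn_floor_div {τ : ℝ} (hτ : 0 < τ) (p : ℕ) :
    Set.EqOn (fun r => ⌊r / τ⌋₊) (fun _ => p) (Set.uIoo (p * τ) ((p + 1 : ℕ) * τ)) := by
  intro r hr
  rw [Set.uIoo_of_le (by gcongr; simp)] at hr
  refine (Nat.floor_eq_iff (div_nonneg (le_trans (by positivity) hr.1.le) hτ.le)).2
    ⟨(le_div_iff₀ hτ).2 hr.1.le, (div_lt_iff₀ hτ).2 (by exact_mod_cast hr.2)⟩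

lemma integral_comp_floor_div (v : ℕ → ℝ) {τ : ℝ} (hτ : 0 < τ) {L N : ℕ} (h : L ≤ N) :
    ∫ r in L * τ..N * τ, v ⌊r / τ⌋₊ = τ * ∑ p ∈ Finset.Ico L N, v p := by
  have hpiece : ∀ p : ℕ, Set.EqOn (fun r => v ⌊r / τ⌋₊) (fun _ => v p)
      (Set.uIoo (p * τ) ((p + 1 : ℕ) * τ)) := fun p r hr => congrArg v (eqOn_floor_div hτ p hr)
  have hsum := intervalIntegral.sum_integral_adjacent_intervals (f := fun r => v ⌊r / τ⌋₊)
    (μ := volume) (a := fun k => ((L + k : ℕ) : ℝ) * τ) (n := N - L)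
    fun k _ => intervalIntegrable_const.congr_uIoo (hpiece (L + k)).symm
  simp only [Nat.add_zero, Nat.add_sub_cancel' h] at hsum
  rw [← hsum, Finset.sum_Ico_eq_sum_range, Finset.mul_sum]
  refine Finset.sum_congr rfl fun k _ => ?_
  rw [← add_assoc, intervalIntegral.integral_congr_uIoo (hpiece (L + k)),
    intervalIntegral.integral_const, smul_eq_mul]
  push_cast
  ring

lemma sub_eq_integral_comp_floor_div (w : ℕ → ℝ) {τ : ℝ} (hτ : 0 < τ) (L N : ℕ) :
    w N - w L = ∫ r in L * τ..N * τ, τ⁻¹ * (w (⌊r / τ⌋₊ + 1) - w ⌊r / τ⌋₊) := by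
  wlog h : L ≤ N generalizing L N
  · rw [intervalIntegral.integral_symm, ← this N L (by omega)]
    ring
  rw [integral_comp_floor_div (fun p => τ⁻¹ * (w (p + 1) - w p)) hτ h, ← Finset.mul_sum,
    Finset.sum_Ico_sub _ h, mul_inv_cancel_left₀ hτ.ne']

lemma tendsto_intervalIntegral_of_tendsto_endpoints {G : ℕ → ℝ → ℝ} {u : ℝ → ℝ} {α β : ℕ → ℝ}
    {l m c d B : ℝ} (hα : Tendsto α atTop (𝓝 l)) (hβ : Tendsto β atTop (𝓝 m))
    (hαI : ∀ j, α j ∈ Set.Icc c d) (hβI : ∀ j, β j ∈ Set.Icc c d) (hG : ∀ j, Measurable (G j))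
    (hB : ∀ᶠ j in atTop, ∀ r ∈ Set.Icc c d, |G j r| ≤ B)
    (hu : ∀ r ∈ Set.uIoc l m, Tendsto (fun j => G j r) atTop (𝓝 (u r))) :
    Tendsto (fun j => ∫ r in α j..β j, G j r) atTop (𝓝 (∫ r in l..m, u r)) := by
  have hlI : l ∈ Set.Icc c d := isClosed_Icc.mem_of_tendsto hα (Eventually.of_forall hαI)
  have hmI : m ∈ Set.Icc c d := isClosed_Icc.mem_of_tendsto hβ (Eventually.of_forall hβI)
  have hsub : ∀ {x y}, x ∈ Set.Icc c d → y ∈ Set.Icc c d → Set.uIoc x y ⊆ Set.Icc c d :=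
    fun hx hy => Set.uIoc_subset_uIcc.trans (Set.uIcc_subset_Icc hx hy)
  have hint : ∀ᶠ j in atTop, ∀ x ∈ Set.Icc c d, ∀ y ∈ Set.Icc c d,
      IntervalIntegrable (G j) volume x y := by
    filter_upwards [hB] with j hj x hx y hy
    refine (intervalIntegrable_const (c := B)).mono_fun' (hG j).aestronglyMeasurable.restrict
      ((ae_restrict_iff' measurableSet_uIoc).2 (ae_of_all _ fun r hr => ?_))
    exact (Real.norm_eq_abs _).trans_le (hj r (hsub hx hy hr))
  have hend : ∀ {γ : ℕ → ℝ} {z : ℝ}, Tendsto γ atTop (𝓝 z) → (∀ j, γ j ∈ Set.Icc c d) →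
      z ∈ Set.Icc c d → Tendsto (fun j => ∫ r in γ j..z, G j r) atTop (𝓝 0) := by
    intro γ z hγ hγI hz
    refine squeeze_zero_norm' ?_ (by simpa using ((hγ.const_sub z).abs.const_mul B))
    filter_upwards [hB] with j hj
    exact intervalIntegral.norm_integral_le_of_norm_le_const fun r hr =>
      (Real.norm_eq_abs _).trans_le (hj r (hsub (hγI j) hz hr))
  have hmid : Tendsto (fun j => ∫ r in l..m, G j r) atTop (𝓝 (∫ r in l..m, u r)) :=
    intervalIntegral.tendsto_integral_filter_of_dominated_convergence (fun _ => B)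
      (Eventually.of_forall fun j => (hG j).aestronglyMeasurable)
      (hB.mono fun j hj => ae_of_all _ fun r hr =>
        (Real.norm_eq_abs _).trans_le (hj r (hsub hlI hmI hr)))
      intervalIntegrable_const (ae_of_all _ hu)
  refine (((hend hα hαI hlI).add hmid).sub (hend hβ hβI hmI)).congr' ?_ |>.trans (by simp)
  filter_upwards [hint] with j hj
  rw [intervalIntegral.integral_add_adjacent_intervals (hj _ (hαI j) _ hlI) (hj _ hlI _ hmI),
    ← intervalIntegral.integral_add_adjacent_intervals (hj _ (hαI j) _ hmI) (hj _ hmI _ (hβI j)),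
    intervalIntegral.integral_symm m (β j)]
  ring

lemma abs_slope_sub_le_of_sub_eq_integral {v u : ℝ → ℝ} {s h ε : ℝ} (hh : h ≠ 0)
    (hv : v (s + h) - v s = ∫ r in s..s + h, u r) (hu : IntervalIntegrable u volume s (s + h))
    (hε : ∀ r ∈ Set.uIoc s (s + h), |u r - u s| ≤ ε) :
    |(v (s + h) - v s) / h - u s| ≤ ε := by
  have hI : (v (s + h) - v s) / h - u s = (∫ r in s..s + h, (u r - u s)) / h := by
    rw [intervalIntegral.integral_sub hu intervalIntegrable_const, intervalIntegral.integral_const,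
      ← hv, smul_eq_mul, add_sub_cancel_left]
    field_simp
  have hle := intervalIntegral.norm_integral_le_of_norm_le_const fun r hr =>
    (Real.norm_eq_abs (u r - u s)).trans_le (hε r hr)
  rw [Real.norm_eq_abs, add_sub_cancel_left] at hle
  rw [hI, abs_div]
  exact (div_le_iff₀ (abs_pos.2 hh)).2 hle

lemma hasDerivWithinAt_Ici_of_sub_eq_integral {v u : ℝ → ℝ} (hu : ContinuousOn u (Set.Ici 0))
    (hv : ∀ l m, 0 ≤ l → 0 ≤ m → v m - v l = ∫ r in l..m, u r) {s : ℝ} (hs : 0 ≤ s) :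
    HasDerivWithinAt v (u s) (Set.Ici 0) s := by
  have hcont : Continuous fun r => u (max r 0) :=
    hu.comp_continuous (continuous_id.max continuous_const) fun r => le_max_right r 0
  have heq : ∀ r ∈ Set.Ici (0 : ℝ), v r = v 0 + ∫ x in (0 : ℝ)..r, u (max x 0) := fun r hr => by
    rw [intervalIntegral.integral_congr (g := u) fun x hx => ?_, ← hv 0 r le_rfl hr]
    · ring
    · rw [Set.uIcc_of_le hr] at hx
      simp only [max_eq_left hx.1]
  have h := (((hcont.integral_hasStrictDerivAt 0 s).hasDerivAt.hasDerivWithinAt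
    (s := Set.Ici 0)).const_add (v 0)).congr heq (heq s hs)
  rwa [max_eq_left hs] at h

section

variable {E : Type*} [NormedAddCommGroup E] [NormedSpace ℝ E]

lemma norm_pow_le_of_mul_le {A : E →L[ℝ] E} {M a τ c : ℝ}
    (hA : ∀ p : ℕ, ‖A ^ p‖ ≤ M * Real.exp (a * (p * τ))) (hτ : 0 ≤ τ) {p : ℕ}
    (hp : p * τ ≤ c) : ‖A ^ p‖ ≤ M * Real.exp (|a| * c) := by
  have hM : 0 ≤ M := by simpa using (norm_nonneg _).trans (hA 0)
  refine (hA p).trans (mul_le_mul_of_nonneg_left (Real.exp_le_exp.2 ?_) hM)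
  calc a * (p * τ) ≤ |a| * (p * τ) := by gcongr; exact le_abs_self a
    _ ≤ |a| * c := by gcongr

lemma norm_pow_apply_sub_pow_apply_le (A : E →L[ℝ] E) (v : E) {m m' : ℕ} {C : ℝ}
    (hC : ∀ p ≤ max m m', ‖A ^ p‖ ≤ C) :
    ‖(A ^ m) v - (A ^ m') v‖ ≤ |(m : ℝ) - m'| * (C * ‖A v - v‖) := by
  wlog h : m' ≤ m generalizing m m'
  · rw [norm_sub_rev, abs_sub_comm]
    exact this (by rwa [max_comm]) (by omega)
  have hstep : ∀ p < m, dist ((A ^ p) v) ((A ^ (p + 1)) v) ≤ C * ‖A v - v‖ := fun p hp => by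
    rw [dist_eq_norm, pow_succ, mul_apply_eq_comp, ← map_sub,
      ← norm_neg, ← map_neg, neg_sub]
    exact ((A ^ p).le_opNorm _).trans
      (mul_le_mul_of_nonneg_right (hC p (le_max_of_le_left hp.le)) (norm_nonneg _))
  have hsum := dist_le_Ico_sum_of_dist_le h fun {p} _ hp => hstep p hp
  rwa [Finset.sum_const, Nat.card_Ico, nsmul_eq_mul, dist_comm, dist_eq_norm, Nat.cast_sub h,
    ← abs_of_nonneg (sub_nonneg.2 (Nat.cast_le.2 h))] at hsum

lemma norm_pow_floor_div_apply_sub_le {A : E →L[ℝ] E} {M a τ c K s s' : ℝ}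
    (hA : ∀ p : ℕ, ‖A ^ p‖ ≤ M * Real.exp (a * (p * τ))) (hτ : 0 < τ)
    (hs : s ∈ Set.Icc 0 c) (hs' : s' ∈ Set.Icc 0 c) {g g' : E} (hK : ‖A g' - g'‖ ≤ τ * K) :
    ‖(A ^ ⌊s / τ⌋₊) g - (A ^ ⌊s' / τ⌋₊) g‖
      ≤ M * Real.exp (|a| * c) * (2 * ‖g - g'‖ + (|s - s'| + τ) * K) := by
  set m := ⌊s / τ⌋₊
  set m' := ⌊s' / τ⌋₊
  set C := M * Real.exp (|a| * c)
  have hC : ∀ p ≤ max m m', ‖A ^ p‖ ≤ C := fun p hp => norm_pow_le_of_mul_le hA hτ.le <| by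
    rcases le_max_iff.1 hp with hp | hp
    · exact (mul_le_mul_of_nonneg_right (Nat.cast_le.2 hp) hτ.le).trans
        ((floor_div_mul_le hs.1 hτ.le).trans hs.2)
    · exact (mul_le_mul_of_nonneg_right (Nat.cast_le.2 hp) hτ.le).trans
        ((floor_div_mul_le hs'.1 hτ.le).trans hs'.2)
  have hC0 : 0 ≤ C := (norm_nonneg _).trans (hC 0 (Nat.zero_le _))
  have hK0 : 0 ≤ K := nonneg_of_mul_nonneg_right ((norm_nonneg _).trans hK) hτ
  have hm := norm_pow_apply_sub_pow_apply_le A g' hC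
  have hfl := abs_floor_div_sub_floor_div_mul_le hs.1 hs'.1 hτ
  have hCm : ∀ p ≤ max m m', ‖(A ^ p) (g - g')‖ ≤ C * ‖g - g'‖ := fun p hp =>
    ((A ^ p).le_opNorm _).trans (mul_le_mul_of_nonneg_right (hC p hp) (norm_nonneg _))
  calc ‖(A ^ m) g - (A ^ m') g‖
      = ‖(A ^ m) (g - g') + ((A ^ m) g' - (A ^ m') g') - (A ^ m') (g - g')‖ := by
        simp only [map_sub]; abel_nf
    _ ≤ C * ‖g - g'‖ + |(m : ℝ) - m'| * (C * (τ * K)) + C * ‖g - g'‖ := by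
        refine (norm_sub_le _ _).trans (add_le_add ((norm_add_le _ _).trans (add_le_add
          (hCm m (le_max_left _ _)) (hm.trans (by gcongr)))) (hCm m' (le_max_right _ _)))
    _ = C * (2 * ‖g - g'‖ + (|(m : ℝ) - m'| * τ) * K) := by ring
    _ ≤ C * (2 * ‖g - g'‖ + (|s - s'| + τ) * K) := by gcongr

lemma norm_apply_apply_le_of_norm_le (ψ : StrongDual ℝ E) {B : E →L[ℝ] E} {C : ℝ}
    (hB : ‖B‖ ≤ C) (x : E) : ‖ψ (B x)‖ ≤ ‖ψ‖ * C * ‖x‖ :=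
  (ψ.comp B).le_of_opNorm_le
    ((ψ.opNorm_comp_le B).trans (mul_le_mul_of_nonneg_left hB (norm_nonneg ψ))) x

lemma norm_apply_sub_apply_apply_le (φ φ' : StrongDual ℝ E) {B : E →L[ℝ] E} {C : ℝ}
    (hB : ‖B‖ ≤ C) (x g g' : E) :
    ‖φ x - φ' (B g')‖ ≤ ‖φ‖ * ‖x - B g‖ + ‖φ‖ * C * ‖g - g'‖ + C * ‖g'‖ * ‖φ - φ'‖ := by
  calc ‖φ x - φ' (B g')‖ = ‖φ (x - B g) + φ (B (g - g')) + (φ - φ') (B g')‖ := by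
        simp only [map_sub, sub_apply]; abel_nf
    _ ≤ _ := norm_add₃_le.trans (add_le_add_three (φ.le_opNorm _)
        (norm_apply_apply_le_of_norm_le φ hB _)
        ((norm_apply_apply_le_of_norm_le _ hB _).trans_eq (by ring)))

lemma tendsto_apply_apply_of_norm_le {ι : Type*} {l : Filter ι} {B : ι → E →L[ℝ] E} {C : ℝ}
    (hB : ∀ i, ‖B i‖ ≤ C) {x : ι → E} {x₀ : E} (hx : Tendsto x l (𝓝 x₀))
    {ψ : ι → StrongDual ℝ E} {ψ₀ : StrongDual ℝ E} (hψ : Tendsto ψ l (𝓝 ψ₀)) {L : ℝ}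
    (h : Tendsto (fun i => ψ₀ (B i x₀)) l (𝓝 L)) :
    Tendsto (fun i => ψ i (B i (x i))) l (𝓝 L) := by
  have hbound : Tendsto (fun i => ‖ψ i‖ * C * ‖x i - x₀‖ + ‖ψ i - ψ₀‖ * C * ‖x₀‖) l (𝓝 0) := by
    simpa using ((hψ.norm.mul_const C).mul (tendsto_iff_norm_sub_tendsto_zero.1 hx)).add
      (((tendsto_iff_norm_sub_tendsto_zero.1 hψ).mul_const C).mul_const ‖x₀‖)
  have hdiff : Tendsto (fun i => ψ i (B i (x i)) - ψ₀ (B i x₀)) l (𝓝 0) := by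
    refine squeeze_zero_norm (fun i => ?_) hbound
    calc ‖ψ i (B i (x i)) - ψ₀ (B i x₀)‖ = ‖ψ i (B i (x i - x₀)) + (ψ i - ψ₀) (B i x₀)‖ := by
          simp only [map_sub, sub_apply]; abel_nf
      _ ≤ _ := (norm_add_le _ _).trans (add_le_add
          (norm_apply_apply_le_of_norm_le _ (hB i) _) (norm_apply_apply_le_of_norm_le _ (hB i) _))
  simpa using hdiff.add h

lemma apply_pow_sub_apply_pow_eq_integral (A : E →L[ℝ] E) (φ : StrongDual ℝ E) (f : E)
    {τ : ℝ} (hτ : 0 < τ) (L N : ℕ) :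
    φ ((A ^ N) f) - φ ((A ^ L) f)
      = ∫ r in L * τ..N * τ, φ ((A ^ ⌊r / τ⌋₊) (τ⁻¹ • (A f - f))) := by
  rw [sub_eq_integral_comp_floor_div (fun p => φ ((A ^ p) f)) hτ]
  simp only [pow_succ, mul_apply_eq_comp, map_smul, map_sub, smul_eq_mul]

lemma apply_pow_sub_apply_pow_eq_integral_adjCLM [CompleteSpace E] (A : E →L[ℝ] E)
    (φ : StrongDual ℝ E) (f : E) {τ : ℝ} (hτ : 0 < τ) (L N : ℕ) :
    φ ((A ^ N) f) - φ ((A ^ L) f)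
      = ∫ r in L * τ..N * τ, (τ⁻¹ • (adjCLM A φ - φ)) ((A ^ ⌊r / τ⌋₊) f) := by
  rw [sub_eq_integral_comp_floor_div (fun p => φ ((A ^ p) f)) hτ]
  simp only [pow_succ', mul_apply_eq_comp, smul_apply, sub_apply, smul_eq_mul]
  rfl

/-- The growth bound of `𝓕_{M,a}` for `F`, sampled along step sizes `τ j → 0⁺`. -/
structure StableAlong (F : ℝ → (E →L[ℝ] E)) (M a : ℝ) (τ : ℕ → ℝ) : Prop where
  nonneg : ∀ j, 0 ≤ τ j
  tendsto : Tendsto τ atTop (𝓝[>] 0)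
  norm_pow_le : ∀ j (p : ℕ), ‖F (τ j) ^ p‖ ≤ M * Real.exp (a * (p * τ j))

lemma MemFClass.norm_pow_le [CompleteSpace E] {F : ℝ → (E →L[ℝ] E)} {M a t : ℝ}
    (hF : MemFClass F M a) (ht : 0 ≤ t) (N p : ℕ) :
    ‖F (t / N) ^ p‖ ≤ M * Real.exp (a * (p * (t / N))) := by
  have hone : ‖(1 : E →L[ℝ] E)‖ ≤ M := by
    simpa [hF.1] using hF.2.1 1 1 one_pos one_pos 0 le_rfl
  rcases Nat.eq_zero_or_pos N with rfl | hN
  · simpa [hF.1] using hone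
  rcases Nat.eq_zero_or_pos p with rfl | hp
  · simpa using hone
  convert hF.2.1 N p hN hp t ht using 3
  ring

lemma MemFClass.stableAlong [CompleteSpace E] {F : ℝ → (E →L[ℝ] E)} {M a t : ℝ}
    (hF : MemFClass F M a) (ht : 0 < t) {N : ℕ → ℕ} (hN : Tendsto N atTop atTop) :
    StableAlong F M a (fun j => t / N j) where
  nonneg j := by positivity
  tendsto := tendsto_nhdsWithin_iff.2 ⟨(tendsto_const_div_atTop_nhds_zero_nat t).comp hN,
    (hN.eventually_gt_atTop 0).mono fun j hj => div_pos ht (Nat.cast_pos.2 hj)⟩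
  norm_pow_le j := hF.norm_pow_le ht.le (N j)

lemma DerivAtZero.tendsto_comp [CompleteSpace E] {F : ℝ → (E →L[ℝ] E)} {f y : E}
    (hF0 : F 0 = 1) (hd : DerivAtZero F f y) {τ : ℕ → ℝ} (hτ : Tendsto τ atTop (𝓝[>] 0)) :
    Tendsto (fun j => (τ j)⁻¹ • (F (τ j) f - f)) atTop (𝓝 y) := by
  simpa [DerivAtZero, hF0, Function.comp_def] using hd.comp hτ

lemma AdjDerivAtZero.tendsto_comp [CompleteSpace E] {F : ℝ → (E →L[ℝ] E)}
    {φ ψ : StrongDual ℝ E} (hF0 : F 0 = 1) (hd : AdjDerivAtZero F φ ψ) {τ : ℕ → ℝ}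
    (hτ : Tendsto τ atTop (𝓝[>] 0)) :
    Tendsto (fun j => (τ j)⁻¹ • (adjCLM (F (τ j)) φ - φ)) atTop (𝓝 ψ) := by
  have hone : adjCLM (F 0) φ = φ := by ext x; simp [adjCLM, hF0]
  simpa [AdjDerivAtZero, hone, Function.comp_def] using hd.comp hτ

namespace StableAlong

variable {F : ℝ → (E →L[ℝ] E)} {M a : ℝ} {τ : ℕ → ℝ}

lemma const_nonneg (hτ : StableAlong F M a τ) : 0 ≤ M := by
  simpa using (norm_nonneg _).trans (hτ.norm_pow_le 0 0)

lemma eventually_pos (hτ : StableAlong F M a τ) : ∀ᶠ j in atTop, 0 < τ j :=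
  (tendsto_nhdsWithin_iff.1 hτ.tendsto).2

lemma tendsto_zero (hτ : StableAlong F M a τ) : Tendsto τ atTop (𝓝 0) :=
  (tendsto_nhdsWithin_iff.1 hτ.tendsto).1

lemma norm_pow_floor_le (hτ : StableAlong F M a τ) (j : ℕ) {s c : ℝ} (hc : 0 ≤ c)
    (hsc : s ≤ c) : ‖F (τ j) ^ ⌊s / τ j⌋₊‖ ≤ M * Real.exp (|a| * c) := by
  refine norm_pow_le_of_mul_le (hτ.norm_pow_le j) (hτ.nonneg j) ?_
  rcases le_total 0 s with hs | hs
  · exact (floor_div_mul_le hs (hτ.nonneg j)).trans hsc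
  · rw [Nat.floor_of_nonpos (div_nonpos_of_nonpos_of_nonneg hs (hτ.nonneg j))]
    simpa using hc

lemma tendsto_floor_div_mul (hτ : StableAlong F M a τ) {s : ℝ} (hs : 0 ≤ s) :
    Tendsto (fun j => (⌊s / τ j⌋₊ : ℝ) * τ j) atTop (𝓝 s) := by
  refine tendsto_of_tendsto_of_tendsto_of_le_of_le' (g := fun j => s - τ j)
    (by simpa using tendsto_const_nhds.sub hτ.tendsto_zero) tendsto_const_nhds ?_
    (Eventually.of_forall fun j => floor_div_mul_le hs (hτ.nonneg j))
  filter_upwards [hτ.eventually_pos] with j hj using (sub_lt_floor_div_mul s hj).le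

lemma eventually_norm_pow_floor_div_sub_lt [CompleteSpace E] (hτ : StableAlong F M a τ)
    (hF0 : F 0 = 1) (hD : Dense {ψ : E | ∃ y, DerivAtZero F ψ y}) (g : E) (c : ℝ) {ε : ℝ}
    (hε : 0 < ε) :
    ∃ δ > 0, ∀ᶠ j in atTop, ∀ s ∈ Set.Icc 0 c, ∀ s' ∈ Set.Icc 0 c, |s - s'| < δ →
      ‖(F (τ j) ^ ⌊s / τ j⌋₊) g - (F (τ j) ^ ⌊s' / τ j⌋₊) g‖ < ε := by
  set C := M * Real.exp (|a| * c)
  have hC : 0 ≤ C := mul_nonneg hτ.const_nonneg (Real.exp_pos _).le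
  obtain ⟨g', ⟨y, hy⟩, hgg'⟩ := hD.exists_dist_lt g (show 0 < ε / 4 / (C + 1) by positivity)
  obtain ⟨K, hK0, hK⟩ : ∃ K, 0 ≤ K ∧ ∀ᶠ j in atTop, ‖F (τ j) g' - g'‖ ≤ τ j * K := by
    refine ⟨‖y‖ + 1, by positivity, ?_⟩
    filter_upwards [hτ.eventually_pos, (hy.tendsto_comp hF0 hτ.tendsto).norm.eventually
      (gt_mem_nhds (lt_add_one ‖y‖))] with j hj hjK
    rw [norm_smul, norm_inv, Real.norm_of_nonneg hj.le, inv_mul_lt_iff₀ hj] at hjK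
    exact hjK.le
  have hδ : 0 < ε / 4 / (C * K + 1) := by positivity
  refine ⟨_, hδ, ?_⟩
  filter_upwards [hτ.eventually_pos, hK, hτ.tendsto_zero.eventually (gt_mem_nhds hδ)]
    with j hj hKj hδj s hs s' hs' hss'
  rw [dist_eq_norm] at hgg'
  calc _ ≤ C * (2 * ‖g - g'‖ + (|s - s'| + τ j) * K) :=
        norm_pow_floor_div_apply_sub_le (hτ.norm_pow_le j) hj hs hs' hKj
    _ ≤ C * (2 * (ε / 4 / (C + 1)) + (ε / 4 / (C * K + 1) + ε / 4 / (C * K + 1)) * K) := by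
        gcongr
    _ = 2 * (C * (ε / 4 / (C + 1))) + 2 * (C * K * (ε / 4 / (C * K + 1))) := by ring
    _ < ε := by
        linarith [mul_div_add_one_lt hC (show 0 < ε / 4 by positivity),
          mul_div_add_one_lt (mul_nonneg hC hK0) (show 0 < ε / 4 by positivity)]

lemma abs_le_of_tendsto (hτ : StableAlong F M a τ) {g : E} {φ : StrongDual ℝ E} {s L : ℝ}
    (hs : 0 ≤ s) (h : Tendsto (fun j => φ ((F (τ j) ^ ⌊s / τ j⌋₊) g)) atTop (𝓝 L)) :
    |L| ≤ M * Real.exp (a * s) * ‖g‖ * ‖φ‖ := by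
  have hlim : Tendsto (fun j => M * Real.exp (a * (⌊s / τ j⌋₊ * τ j)) * ‖g‖ * ‖φ‖) atTop
      (𝓝 (M * Real.exp (a * s) * ‖g‖ * ‖φ‖)) :=
    ((((Real.continuous_exp.tendsto _).comp
      ((hτ.tendsto_floor_div_mul hs).const_mul a)).const_mul M).mul_const _).mul_const _
  refine le_of_tendsto_of_tendsto' h.abs hlim fun j => ?_
  rw [← Real.norm_eq_abs]
  exact (norm_apply_apply_le_of_norm_le φ (hτ.norm_pow_le j _) g).trans_eq (by ring)

lemma exists_forall_abs_sub_lt [CompleteSpace E] (hτ : StableAlong F M a τ) (hF0 : F 0 = 1)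
    (hD : Dense {ψ : E | ∃ y, DerivAtZero F ψ y}) {g : E} {T : ℝ → StrongDual ℝ E → ℝ}
    {Υ : Set (StrongDual ℝ E)} (hΥ : Bornology.IsBounded Υ)
    (hT : ∀ φ ∈ Υ, ∀ s, 0 ≤ s →
      Tendsto (fun j => φ ((F (τ j) ^ ⌊s / τ j⌋₊) g)) atTop (𝓝 (T s φ)))
    {s : ℝ} (hs : 0 ≤ s) {ε : ℝ} (hε : 0 < ε) :
    ∃ δ > 0, ∀ s', 0 ≤ s' → |s' - s| < δ → ∀ φ ∈ Υ, |T s' φ - T s φ| < ε := by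
  obtain ⟨R, hR0, hR⟩ : ∃ R, 0 ≤ R ∧ ∀ φ ∈ Υ, ‖φ‖ ≤ R := by
    obtain ⟨R, hR⟩ := isBounded_iff_forall_norm_le.1 hΥ
    exact ⟨max R 0, le_max_right _ _, fun φ hφ => (hR φ hφ).trans (le_max_left _ _)⟩
  obtain ⟨δ, hδ, hev⟩ := hτ.eventually_norm_pow_floor_div_sub_lt hF0 hD g (s + 1)
    (show 0 < ε / (R + 1) by positivity)
  refine ⟨min δ 1, by positivity, fun s' hs' hss' φ hφ => ?_⟩
  have hs's : s' ≤ s + 1 := by linarith [(abs_sub_lt_iff.1 (hss'.trans_le (min_le_right _ _))).1]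
  have hle : |T s' φ - T s φ| ≤ ‖φ‖ * (ε / (R + 1)) := by
    refine le_of_tendsto ((hT φ hφ s' hs').sub (hT φ hφ s hs)).abs ?_
    filter_upwards [hev] with j hj
    rw [← map_sub, ← Real.norm_eq_abs]
    exact (φ.le_opNorm _).trans (mul_le_mul_of_nonneg_left (hj s' ⟨hs', hs's⟩ s
      ⟨hs, by linarith⟩ (hss'.trans_le (min_le_left _ _))).le (norm_nonneg _))
  exact hle.trans_lt ((mul_le_mul_of_nonneg_right (hR φ hφ) (by positivity)).trans_lt
    (mul_div_add_one_lt hR0 hε))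

lemma continuousOn_of_tendsto [CompleteSpace E] (hτ : StableAlong F M a τ) (hF0 : F 0 = 1)
    (hD : Dense {ψ : E | ∃ y, DerivAtZero F ψ y}) {g : E} {φ : StrongDual ℝ E} {u : ℝ → ℝ}
    (hu : ∀ s, 0 ≤ s → Tendsto (fun j => φ ((F (τ j) ^ ⌊s / τ j⌋₊) g)) atTop (𝓝 (u s))) :
    ContinuousOn u (Set.Ici 0) := by
  intro s hs
  rw [Metric.continuousWithinAt_iff]
  intro ε hε
  obtain ⟨δ, hδ, h⟩ := hτ.exists_forall_abs_sub_lt hF0 hD (T := fun s _ => u s)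
    Bornology.isBounded_singleton (by simpa using hu) hs hε
  exact ⟨δ, hδ, fun {s'} hs' hss' => h s' hs' hss' φ rfl⟩

lemma tendsto_integral_pow_floor_div (hτ : StableAlong F M a τ) {ψ : ℕ → StrongDual ℝ E}
    {ψ₀ : StrongDual ℝ E} (hψ : Tendsto ψ atTop (𝓝 ψ₀)) {x : ℕ → E} {x₀ : E}
    (hx : Tendsto x atTop (𝓝 x₀)) {u : ℝ → ℝ}
    (hu : ∀ r, 0 ≤ r → Tendsto (fun j => ψ₀ ((F (τ j) ^ ⌊r / τ j⌋₊) x₀)) atTop (𝓝 (u r)))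
    {l m : ℝ} (hl : 0 ≤ l) (hm : 0 ≤ m) :
    Tendsto (fun j => ∫ r in ⌊l / τ j⌋₊ * τ j..⌊m / τ j⌋₊ * τ j,
      ψ j ((F (τ j) ^ ⌊r / τ j⌋₊) (x j))) atTop (𝓝 (∫ r in l..m, u r)) := by
  have hI : ∀ {s}, 0 ≤ s → s ≤ max l m → ∀ j, (⌊s / τ j⌋₊ : ℝ) * τ j ∈ Set.Icc 0 (max l m) :=
    fun hs hsd j => ⟨mul_nonneg (Nat.cast_nonneg _) (hτ.nonneg j),
      (floor_div_mul_le hs (hτ.nonneg j)).trans hsd⟩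
  have hM := hτ.const_nonneg
  refine tendsto_intervalIntegral_of_tendsto_endpoints (hτ.tendsto_floor_div_mul hl)
    (hτ.tendsto_floor_div_mul hm) (hI hl (le_max_left _ _)) (hI hm (le_max_right _ _))
    (fun j => (measurable_from_nat (f := fun p : ℕ => ψ j ((F (τ j) ^ p) (x j)))).comp
      (Nat.measurable_floor.comp (measurable_id.div_const _)))
    (B := (‖ψ₀‖ + 1) * (M * Real.exp (|a| * max l m)) * (‖x₀‖ + 1)) ?_ fun r hr => ?_
  · filter_upwards [hψ.norm.eventually (gt_mem_nhds (lt_add_one ‖ψ₀‖)),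
      hx.norm.eventually (gt_mem_nhds (lt_add_one ‖x₀‖))] with j hψj hxj r hr
    rw [← Real.norm_eq_abs]
    refine (norm_apply_apply_le_of_norm_le _
      (hτ.norm_pow_floor_le j (hl.trans (le_max_left _ _)) hr.2) _).trans ?_
    gcongr
  · have hr0 : 0 ≤ r := (le_min hl hm).trans hr.1.le
    exact tendsto_apply_apply_of_norm_le (fun j => hτ.norm_pow_floor_le j hr0 le_rfl) hx hψ
      (hu r hr0)

lemma sub_eq_integral_of_derivAtZero [CompleteSpace E] (hτ : StableAlong F M a τ)
    (hF0 : F 0 = 1) {f y : E} (hd : DerivAtZero F f y) {φ : StrongDual ℝ E} {v u : ℝ → ℝ}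
    (hv : ∀ s, 0 ≤ s → Tendsto (fun j => φ ((F (τ j) ^ ⌊s / τ j⌋₊) f)) atTop (𝓝 (v s)))
    (hu : ∀ s, 0 ≤ s → Tendsto (fun j => φ ((F (τ j) ^ ⌊s / τ j⌋₊) y)) atTop (𝓝 (u s)))
    {l m : ℝ} (hl : 0 ≤ l) (hm : 0 ≤ m) : v m - v l = ∫ r in l..m, u r := by
  refine tendsto_nhds_unique ((hv m hm).sub (hv l hl)) ((hτ.tendsto_integral_pow_floor_div
    tendsto_const_nhds (hd.tendsto_comp hF0 hτ.tendsto) hu hl hm).congr' ?_)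
  filter_upwards [hτ.eventually_pos] with j hj
  exact (apply_pow_sub_apply_pow_eq_integral _ φ f hj _ _).symm

lemma sub_eq_integral_of_adjDerivAtZero [CompleteSpace E] (hτ : StableAlong F M a τ)
    (hF0 : F 0 = 1) {φ ψ : StrongDual ℝ E} (hd : AdjDerivAtZero F φ ψ) {f : E} {v u : ℝ → ℝ}
    (hv : ∀ s, 0 ≤ s → Tendsto (fun j => φ ((F (τ j) ^ ⌊s / τ j⌋₊) f)) atTop (𝓝 (v s)))
    (hu : ∀ s, 0 ≤ s → Tendsto (fun j => ψ ((F (τ j) ^ ⌊s / τ j⌋₊) f)) atTop (𝓝 (u s)))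
    {l m : ℝ} (hl : 0 ≤ l) (hm : 0 ≤ m) : v m - v l = ∫ r in l..m, u r := by
  refine tendsto_nhds_unique ((hv m hm).sub (hv l hl)) ((hτ.tendsto_integral_pow_floor_div
    (hd.tendsto_comp hF0 hτ.tendsto) tendsto_const_nhds hu hl hm).congr' ?_)
  filter_upwards [hτ.eventually_pos] with j hj
  exact (apply_pow_sub_apply_pow_eq_integral_adjCLM _ φ f hj _ _).symm

lemma exists_forall_abs_slope_sub_lt [CompleteSpace E] (hτ : StableAlong F M a τ)
    (hF0 : F 0 = 1) (hD : Dense {ψ : E | ∃ y, DerivAtZero F ψ y}) {f y : E}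
    (hd : DerivAtZero F f y) {V U : ℝ → StrongDual ℝ E → ℝ} {Υ : Set (StrongDual ℝ E)}
    (hΥ : Bornology.IsBounded Υ)
    (hV : ∀ φ ∈ Υ, ∀ s, 0 ≤ s →
      Tendsto (fun j => φ ((F (τ j) ^ ⌊s / τ j⌋₊) f)) atTop (𝓝 (V s φ)))
    (hU : ∀ φ ∈ Υ, ∀ s, 0 ≤ s →
      Tendsto (fun j => φ ((F (τ j) ^ ⌊s / τ j⌋₊) y)) atTop (𝓝 (U s φ)))
    {s : ℝ} (hs : 0 ≤ s) {ε : ℝ} (hε : 0 < ε) :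
    ∃ δ > 0, ∀ h : ℝ, h ≠ 0 → |h| < δ → 0 ≤ s + h →
      ∀ φ ∈ Υ, |(V (s + h) φ - V s φ) / h - U s φ| < ε := by
  obtain ⟨δ, hδ, hUδ⟩ := hτ.exists_forall_abs_sub_lt hF0 hD hΥ hU hs (half_pos hε)
  refine ⟨δ, hδ, fun h hh hhδ hsh φ hφ => ?_⟩
  have hsub : Set.uIcc s (s + h) ⊆ Set.Ici 0 := fun r hr => (le_min hs hsh).trans hr.1
  refine (abs_slope_sub_le_of_sub_eq_integral (v := (V · φ)) (u := (U · φ)) hh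
    (hτ.sub_eq_integral_of_derivAtZero hF0 hd (hV φ hφ) (hU φ hφ) hs hsh)
    ((hτ.continuousOn_of_tendsto hF0 hD (hU φ hφ)).mono hsub).intervalIntegrable
    fun r hr => (hUδ r (hsub (Set.uIoc_subset_uIcc hr)) ?_ φ hφ).le).trans_lt (half_lt_self hε)
  have := Set.abs_sub_left_of_mem_uIcc (Set.uIoc_subset_uIcc hr)
  rw [add_sub_cancel_left] at this
  exact this.trans_lt hhδ

lemma exists_eventually_abs_sub_lt [CompleteSpace E] (hτ : StableAlong F M a τ)
    (hF0 : F 0 = 1) (hD : Dense {ψ : E | ∃ y, DerivAtZero F ψ y}) {P : Set E}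
    {Q : Set (StrongDual ℝ E)} {g : E} (hg : g ∈ closure P) {φ : StrongDual ℝ E}
    (hφ : φ ∈ closure Q) {s : ℝ} (hs : 0 ≤ s) {ε : ℝ} (hε : 0 < ε) :
    ∃ g' ∈ P, ∃ φ' ∈ Q, ∃ q : ℚ, ∀ᶠ j in atTop,
      |φ ((F (τ j) ^ ⌊s / τ j⌋₊) g) - φ' ((F (τ j) ^ ⌊(q : ℝ) / τ j⌋₊) g')| < ε := by
  set C := M * Real.exp (|a| * (s + 1))
  have hC : 0 ≤ C := mul_nonneg hτ.const_nonneg (Real.exp_pos _).le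
  obtain ⟨δ, hδ, hev⟩ := hτ.eventually_norm_pow_floor_div_sub_lt hF0 hD g (s + 1)
    (show 0 < ε / 3 / (‖φ‖ + 1) by positivity)
  obtain ⟨q, hsq, hqs⟩ := exists_rat_btwn (lt_add_of_pos_right s (lt_min hδ one_pos))
  obtain ⟨g', hg'P, hgg'⟩ := Metric.mem_closure_iff.1 hg _
    (show 0 < ε / 3 / (‖φ‖ * C + 1) by positivity)
  obtain ⟨φ', hφ'Q, hφφ'⟩ := Metric.mem_closure_iff.1 hφ _
    (show 0 < ε / 3 / (C * ‖g'‖ + 1) by positivity)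
  rw [dist_eq_norm] at hgg' hφφ'
  refine ⟨g', hg'P, φ', hφ'Q, q, ?_⟩
  filter_upwards [hev] with j hj
  have hq : |s - q| < δ := by
    rw [abs_sub_lt_iff]
    constructor <;> linarith [min_le_left δ 1]
  have hB : ‖F (τ j) ^ ⌊(q : ℝ) / τ j⌋₊‖ ≤ C :=
    hτ.norm_pow_floor_le j (by positivity) (by linarith [min_le_right δ 1])
  have h1 := hj s ⟨hs, by linarith⟩ q ⟨by linarith, by linarith [min_le_right δ 1]⟩ hq
  rw [← Real.norm_eq_abs]
  calc _ ≤ ‖φ‖ * ‖(F (τ j) ^ ⌊s / τ j⌋₊) g - (F (τ j) ^ ⌊(q : ℝ) / τ j⌋₊) g‖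
          + ‖φ‖ * C * ‖g - g'‖ + C * ‖g'‖ * ‖φ - φ'‖ := norm_apply_sub_apply_apply_le _ _ hB _ _ _
    _ ≤ ‖φ‖ * (ε / 3 / (‖φ‖ + 1)) + ‖φ‖ * C * (ε / 3 / (‖φ‖ * C + 1))
          + C * ‖g'‖ * (ε / 3 / (C * ‖g'‖ + 1)) := by gcongr
    _ < ε / 3 + ε / 3 + ε / 3 := by
        gcongr
        · exact mul_div_add_one_lt (norm_nonneg _) (by positivity)
        · exact mul_div_add_one_lt (by positivity) (by positivity)
        · exact mul_div_add_one_lt (by positivity) (by positivity)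
    _ = ε := by ring

lemma exists_strictMono_tendsto [CompleteSpace E] (hτ : StableAlong F M a τ) (hF0 : F 0 = 1)
    (hD : Dense {ψ : E | ∃ y, DerivAtZero F ψ y}) {Φ : Set E}
    (hΦ : TopologicalSpace.IsSeparable Φ) {Ψ : Set (StrongDual ℝ E)}
    (hΨ : TopologicalSpace.IsSeparable Ψ) :
    ∃ k : ℕ → ℕ, StrictMono k ∧ ∀ g ∈ Φ, ∀ φ ∈ Ψ, ∀ s, 0 ≤ s →
      ∃ L, Tendsto (fun j => φ ((F (τ (k j)) ^ ⌊s / τ (k j)⌋₊) g)) atTop (𝓝 L) := by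
  obtain ⟨P, hPc, hΦP⟩ := hΦ
  obtain ⟨Q, hQc, hΨQ⟩ := hΨ
  have := hPc.to_subtype
  have := hQc.to_subtype
  obtain ⟨k, hk, hlim⟩ := exists_strictMono_forall_tendsto_of_abs_le
    (fun j (i : P × Q × ℚ) => (i.2.1 : StrongDual ℝ E) ((F (τ j) ^ ⌊(i.2.2 : ℝ) / τ j⌋₊) i.1))
    (fun i => ‖(i.2.1 : StrongDual ℝ E)‖ * (M * Real.exp (|a| * |(i.2.2 : ℝ)|)) * ‖(i.1 : E)‖)
    fun j i => (Real.norm_eq_abs _).symm.trans_le (norm_apply_apply_le_of_norm_le _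
      (hτ.norm_pow_floor_le j (abs_nonneg _) (le_abs_self _)) _)
  refine ⟨k, hk, fun g hg φ hφ s hs => cauchySeq_tendsto_of_complete
    (cauchySeq_of_forall_eventually_dist_lt fun ε hε => ?_)⟩
  obtain ⟨g', hg'P, φ', hφ'Q, q, happrox⟩ :=
    hτ.exists_eventually_abs_sub_lt hF0 hD (hΦP hg) (hΨQ hφ) hs (half_pos hε)
  obtain ⟨L, hL⟩ := hlim (⟨g', hg'P⟩, ⟨φ', hφ'Q⟩, q)
  refine ⟨L, ?_⟩
  filter_upwards [hk.tendsto_atTop.eventually happrox, hL.eventually (Metric.ball_mem_nhds L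
    (half_pos hε))] with j h1 h2
  rw [Real.dist_eq] at h2 ⊢
  calc _ ≤ _ := abs_sub_le _ (φ' ((F (τ (k j)) ^ ⌊(q : ℝ) / τ (k j)⌋₊) g')) L
    _ < ε := by linarith

end StableAlong

end

theorem chernoff_prop1_general (F : ℝ → (X →L[ℝ] X)) (M a : ℝ)
    (hF : MemFClass F M a) (t : ℝ) (ht : 0 < t)
    (n : ℕ → ℕ) (hn : StrictMono n)
    (Φ : Submodule ℝ X)
    (hΦs : TopologicalSpace.IsSeparable (Φ : Set X))
    (Ψ : Submodule ℝ (StrongDual ℝ X))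
    (hΨs : TopologicalSpace.IsSeparable (Ψ : Set (StrongDual ℝ X))) :
    -- existence of a subsequence along which all the limits exist
    (∃ k : ℕ → ℕ, StrictMono k ∧
      ∀ g ∈ Φ, ∀ φ ∈ Ψ, ∀ s : ℝ, 0 < s →
        ∃ L : ℝ, Tendsto (fun j : ℕ => φ (((F (t / (n (k j)))) ^ ⌊(n (k j) : ℝ) * s⌋₊) g))
          atTop (𝓝 L)) ∧
    -- properties of the limit family, for any such chosen subsequence
    (∀ k : ℕ → ℕ, StrictMono k →
      ∀ T : ℝ → X → StrongDual ℝ X → ℝ,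
      (∀ s : ℝ, 0 ≤ s → ∀ g ∈ Φ, ∀ φ ∈ Ψ,
        Tendsto (fun j : ℕ => φ (((F (t / (n (k j)))) ^ ⌊(n (k j) : ℝ) * (s / t)⌋₊) g))
          atTop (𝓝 (T s g φ))) →
      -- (a) bilinearity and the bound
      ((∀ s : ℝ, 0 ≤ s → ∀ g₁ ∈ Φ, ∀ g₂ ∈ Φ, ∀ φ ∈ Ψ,
          T s (g₁ + g₂) φ = T s g₁ φ + T s g₂ φ) ∧
        (∀ s : ℝ, 0 ≤ s → ∀ (c : ℝ), ∀ g ∈ Φ, ∀ φ ∈ Ψ, T s (c • g) φ = c * T s g φ) ∧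
        (∀ s : ℝ, 0 ≤ s → ∀ g ∈ Φ, ∀ φ₁ ∈ Ψ, ∀ φ₂ ∈ Ψ,
          T s g (φ₁ + φ₂) = T s g φ₁ + T s g φ₂) ∧
        (∀ s : ℝ, 0 ≤ s → ∀ (c : ℝ), ∀ g ∈ Φ, ∀ φ ∈ Ψ, T s g (c • φ) = c * T s g φ) ∧
        (∀ s : ℝ, 0 ≤ s → ∀ g ∈ Φ, ∀ φ ∈ Ψ,
          |T s g φ| ≤ M * Real.exp (a * s) * ‖g‖ * ‖φ‖)) ∧
      -- (b) continuity in `s`, uniform in `φ` from bounded subsets of `Ψ`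
      ((∀ g ∈ Φ, ∀ φ ∈ Ψ, ContinuousOn (fun s => T s g φ) (Set.Ici (0 : ℝ))) ∧
        (∀ g ∈ Φ, ∀ Υ : Set (StrongDual ℝ X), Υ ⊆ Ψ → Bornology.IsBounded Υ →
          ∀ s : ℝ, 0 ≤ s → ∀ ε > 0, ∃ δ > 0, ∀ s' : ℝ, 0 ≤ s' → |s' - s| < δ →
            ∀ φ ∈ Υ, |T s' g φ - T s g φ| < ε)) ∧
      -- (c) differentiability in `s` for `f ∈ Φ ∩ D(F'(0))` with `F'(0)f ∈ Φ`
      (∀ f ∈ Φ, ∀ y : X, DerivAtZero F f y → y ∈ Φ →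
        (∀ φ ∈ Ψ, ∀ s : ℝ, 0 ≤ s →
          HasDerivWithinAt (fun r => T r f φ) (T s y φ) (Set.Ici (0 : ℝ)) s) ∧
        (∀ Υ : Set (StrongDual ℝ X), Υ ⊆ Ψ → Bornology.IsBounded Υ →
          ∀ s : ℝ, 0 ≤ s → ∀ ε > 0, ∃ δ > 0, ∀ h : ℝ, h ≠ 0 → |h| < δ → 0 ≤ s + h →
            ∀ φ ∈ Υ, |(T (s + h) f φ - T s f φ) / h - T s y φ| < ε)) ∧
      -- (d) the integral identity
      (∀ φ ∈ Ψ, ∀ ψ : StrongDual ℝ X, AdjDerivAtZero F φ ψ → ψ ∈ Ψ →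
        ∀ l m : ℝ, 0 ≤ l → 0 ≤ m → ∀ f ∈ Φ,
          T m f φ - T l f φ = ∫ s in l..m, T s f ψ) ∧
      -- (e) differentiability in `s` through the adjoint derivative
      (∀ φ ∈ Ψ, ∀ ψ : StrongDual ℝ X, AdjDerivAtZero F φ ψ → ψ ∈ Ψ →
        ∀ f ∈ Φ, ∀ s : ℝ, 0 ≤ s →
          HasDerivWithinAt (fun r => T r f φ) (T s f ψ) (Set.Ici (0 : ℝ)) s)) := by
  have hF0 : F 0 = 1 := hF.1
  have hD := hF.2.2
  refine ⟨?_, fun k hk T HT => ?_⟩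
  · obtain ⟨k, hk, hlim⟩ := (hF.stableAlong ht hn.tendsto_atTop).exists_strictMono_tendsto
      hF0 hD hΦs hΨs
    refine ⟨k, hk, fun g hg φ hφ s hs => ?_⟩
    simpa only [show ∀ N : ℕ, s * t / (t / N) = N * s from fun N => by field_simp]
      using hlim g hg φ hφ (s * t) (by positivity)
  set τ : ℕ → ℝ := fun j => t / n (k j)
  have hτ : StableAlong F M a τ := hF.stableAlong ht (hn.tendsto_atTop.comp hk.tendsto_atTop)
  have hT : ∀ g ∈ Φ, ∀ φ ∈ Ψ, ∀ s, 0 ≤ s →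
      Tendsto (fun j => φ ((F (τ j) ^ ⌊s / τ j⌋₊) g)) atTop (𝓝 (T s g φ)) :=
    fun g hg φ hφ s hs => by
      simpa only [show ∀ N : ℕ, (N : ℝ) * (s / t) = s / (t / N) from fun N => by
        rw [div_div_eq_mul_div]; ring] using HT s hs g hg φ hφ
  refine ⟨⟨?_, ?_, ?_, ?_, ?_⟩, ⟨?_, ?_⟩, fun f hf y hd hy => ⟨?_, ?_⟩, ?_, ?_⟩
  · exact fun s hs g₁ hg₁ g₂ hg₂ φ hφ => tendsto_nhds_unique (hT _ (add_mem hg₁ hg₂) φ hφ s hs)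
      (by simpa using (hT _ hg₁ φ hφ s hs).add (hT _ hg₂ φ hφ s hs))
  · exact fun s hs c g hg φ hφ => tendsto_nhds_unique (hT _ (Φ.smul_mem c hg) φ hφ s hs)
      (by simpa using (hT _ hg φ hφ s hs).const_mul c)
  · exact fun s hs g hg φ₁ hφ₁ φ₂ hφ₂ => tendsto_nhds_unique (hT g hg _ (add_mem hφ₁ hφ₂) s hs)
      (by simpa using (hT g hg _ hφ₁ s hs).add (hT g hg _ hφ₂ s hs))
  · exact fun s hs c g hg φ hφ => tendsto_nhds_unique (hT g hg _ (Ψ.smul_mem c hφ) s hs)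
      (by simpa using (hT g hg _ hφ s hs).const_mul c)
  · exact fun s hs g hg φ hφ => hτ.abs_le_of_tendsto hs (hT g hg φ hφ s hs)
  · exact fun g hg φ hφ => hτ.continuousOn_of_tendsto hF0 hD (hT g hg φ hφ)
  · exact fun g hg Υ hΥ hb s hs ε hε =>
      hτ.exists_forall_abs_sub_lt hF0 hD hb (fun φ hφ => hT g hg φ (hΥ hφ)) hs hε
  · exact fun φ hφ s hs => hasDerivWithinAt_Ici_of_sub_eq_integral
      (hτ.continuousOn_of_tendsto hF0 hD (hT y hy φ hφ))
      (fun l m hl hm => hτ.sub_eq_integral_of_derivAtZero hF0 hd (hT f hf φ hφ) (hT y hy φ hφ)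
        hl hm) hs
  · exact fun Υ hΥ hb s hs ε hε => hτ.exists_forall_abs_slope_sub_lt hF0 hD hd hb
      (fun φ hφ => hT f hf φ (hΥ hφ)) (fun φ hφ => hT y hy φ (hΥ hφ)) hs hε
  · exact fun φ hφ ψ hd hψ l m hl hm f hf => hτ.sub_eq_integral_of_adjDerivAtZero hF0 hd
      (hT f hf φ hφ) (hT f hf ψ hψ) hl hm
  · exact fun φ hφ ψ hd hψ f hf s hs => hasDerivWithinAt_Ici_of_sub_eq_integral
      (hτ.continuousOn_of_tendsto hF0 hD (hT f hf ψ hψ))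
      (fun l m hl hm => hτ.sub_eq_integral_of_adjDerivAtZero hF0 hd (hT f hf φ hφ)
        (hT f hf ψ hψ) hl hm) hs

/-- Proposition 1: construction of the limit family `T_s(g, φ)`
along a subsequence, and its properties (a)–(e). -/
theorem chernoff_prop1 (F : ℝ → (X →L[ℝ] X)) (M a : ℝ) (hM : 1 ≤ M)
    (hF : MemFClass F M a) (t : ℝ) (ht : 0 < t)
    (n : ℕ → ℕ) (hn : StrictMono n)
    (Φ : Submodule ℝ X) (hΦc : IsClosed (Φ : Set X))
    (hΦs : TopologicalSpace.IsSeparable (Φ : Set X))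
    (Ψ : Submodule ℝ (StrongDual ℝ X)) (hΨc : IsClosed (Ψ : Set (StrongDual ℝ X)))
    (hΨs : TopologicalSpace.IsSeparable (Ψ : Set (StrongDual ℝ X))) :
    -- existence of a subsequence along which all the limits exist
    (∃ k : ℕ → ℕ, StrictMono k ∧
      ∀ g ∈ Φ, ∀ φ ∈ Ψ, ∀ s : ℝ, 0 < s →
        ∃ L : ℝ, Tendsto (fun j : ℕ => φ (((F (t / (n (k j)))) ^ ⌊(n (k j) : ℝ) * s⌋₊) g))
          atTop (𝓝 L)) ∧
    -- properties of the limit family, for any such chosen subsequence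
    (∀ k : ℕ → ℕ, StrictMono k →
      ∀ T : ℝ → X → StrongDual ℝ X → ℝ,
      (∀ s : ℝ, 0 ≤ s → ∀ g ∈ Φ, ∀ φ ∈ Ψ,
        Tendsto (fun j : ℕ => φ (((F (t / (n (k j)))) ^ ⌊(n (k j) : ℝ) * (s / t)⌋₊) g))
          atTop (𝓝 (T s g φ))) →
      -- (a) bilinearity and the bound
      ((∀ s : ℝ, 0 ≤ s → ∀ g₁ ∈ Φ, ∀ g₂ ∈ Φ, ∀ φ ∈ Ψ,
          T s (g₁ + g₂) φ = T s g₁ φ + T s g₂ φ) ∧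
        (∀ s : ℝ, 0 ≤ s → ∀ (c : ℝ), ∀ g ∈ Φ, ∀ φ ∈ Ψ, T s (c • g) φ = c * T s g φ) ∧
        (∀ s : ℝ, 0 ≤ s → ∀ g ∈ Φ, ∀ φ₁ ∈ Ψ, ∀ φ₂ ∈ Ψ,
          T s g (φ₁ + φ₂) = T s g φ₁ + T s g φ₂) ∧
        (∀ s : ℝ, 0 ≤ s → ∀ (c : ℝ), ∀ g ∈ Φ, ∀ φ ∈ Ψ, T s g (c • φ) = c * T s g φ) ∧
        (∀ s : ℝ, 0 ≤ s → ∀ g ∈ Φ, ∀ φ ∈ Ψ,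
          |T s g φ| ≤ M * Real.exp (a * s) * ‖g‖ * ‖φ‖)) ∧
      -- (b) continuity in `s`, uniform in `φ` from bounded subsets of `Ψ`
      ((∀ g ∈ Φ, ∀ φ ∈ Ψ, ContinuousOn (fun s => T s g φ) (Set.Ici (0 : ℝ))) ∧
        (∀ g ∈ Φ, ∀ Υ : Set (StrongDual ℝ X), Υ ⊆ Ψ → Bornology.IsBounded Υ →
          ∀ s : ℝ, 0 ≤ s → ∀ ε > 0, ∃ δ > 0, ∀ s' : ℝ, 0 ≤ s' → |s' - s| < δ →
            ∀ φ ∈ Υ, |T s' g φ - T s g φ| < ε)) ∧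
      -- (c) differentiability in `s` for `f ∈ Φ ∩ D(F'(0))` with `F'(0)f ∈ Φ`
      (∀ f ∈ Φ, ∀ y : X, DerivAtZero F f y → y ∈ Φ →
        (∀ φ ∈ Ψ, ∀ s : ℝ, 0 ≤ s →
          HasDerivWithinAt (fun r => T r f φ) (T s y φ) (Set.Ici (0 : ℝ)) s) ∧
        (∀ Υ : Set (StrongDual ℝ X), Υ ⊆ Ψ → Bornology.IsBounded Υ →
          ∀ s : ℝ, 0 ≤ s → ∀ ε > 0, ∃ δ > 0, ∀ h : ℝ, h ≠ 0 → |h| < δ → 0 ≤ s + h →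
            ∀ φ ∈ Υ, |(T (s + h) f φ - T s f φ) / h - T s y φ| < ε)) ∧
      -- (d) the integral identity
      (∀ φ ∈ Ψ, ∀ ψ : StrongDual ℝ X, AdjDerivAtZero F φ ψ → ψ ∈ Ψ →
        ∀ l m : ℝ, 0 ≤ l → 0 ≤ m → ∀ f ∈ Φ,
          T m f φ - T l f φ = ∫ s in l..m, T s f ψ) ∧
      -- (e) differentiability in `s` through the adjoint derivative
      (∀ φ ∈ Ψ, ∀ ψ : StrongDual ℝ X, AdjDerivAtZero F φ ψ → ψ ∈ Ψ →
        ∀ f ∈ Φ, ∀ s : ℝ, 0 ≤ s →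
          HasDerivWithinAt (fun r => T r f φ) (T s f ψ) (Set.Ici (0 : ℝ)) s)) :=
  chernoff_prop1_general F M a hF t ht n hn Φ hΦs Ψ hΨs
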